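/- In a 2-agent 2×2 general-sum game with u_r u_c = 0 (so the linearization matrix U is not invertible), if both agents follow GA-SPP with γ₀ and η satisfying Conditions 1–3, then from any initial strategy pair there exists a finite K such that (α_k,β_k) = (α_K,β_K) for all k ≥ K, and (α_K,β_K) is a Nash equilibrium. -/

import Mathlib

/- Framework for 2-agent 2×2 general-sum games with scalar strategies
   α, β ∈ [0,1] (the probability of the first action). -/

open Filter Topology

noncomputable section

/-- Projection of a real number onto [0, 1] (clamping). -/
def clamp (x : ℝ) : ℝ := max 0 (min 1 x)

/-- Row player's expected payoff. -/
def Vr2 (R : Matrix (Fin 2) (Fin 2) ℝ) (α β : ℝ) : ℝ :=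
  R 0 0 * (α * β) + R 0 1 * (α * (1 - β)) +
  R 1 0 * ((1 - α) * β) + R 1 1 * ((1 - α) * (1 - β))

/-- Column player's expected payoff. -/
def Vc2 (C : Matrix (Fin 2) (Fin 2) ℝ) (α β : ℝ) : ℝ :=
  C 0 0 * (α * β) + C 0 1 * (α * (1 - β)) +
  C 1 0 * ((1 - α) * β) + C 1 1 * ((1 - α) * (1 - β))

def ur2 (R : Matrix (Fin 2) (Fin 2) ℝ) : ℝ := R 0 0 + R 1 1 - R 0 1 - R 1 0
def br2 (R : Matrix (Fin 2) (Fin 2) ℝ) : ℝ := R 0 1 - R 1 1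
def uc2 (C : Matrix (Fin 2) (Fin 2) ℝ) : ℝ := C 0 0 + C 1 1 - C 0 1 - C 1 0
def bc2 (C : Matrix (Fin 2) (Fin 2) ℝ) : ℝ := C 1 0 - C 1 1

/-- ∂_α V_r(α, β) = u_r β + b_r. -/
def dVr2 (R : Matrix (Fin 2) (Fin 2) ℝ) (β : ℝ) : ℝ := ur2 R * β + br2 R

/-- ∂_β V_c(α, β) = u_c α + b_c. -/
def dVc2 (C : Matrix (Fin 2) (Fin 2) ℝ) (α : ℝ) : ℝ := uc2 C * α + bc2 C

/-- (α, β) is a Nash equilibrium of the 2×2 game. -/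
def IsNash2 (R C : Matrix (Fin 2) (Fin 2) ℝ) (α β : ℝ) : Prop :=
  α ∈ Set.Icc (0 : ℝ) 1 ∧ β ∈ Set.Icc (0 : ℝ) 1 ∧
  (∀ α' ∈ Set.Icc (0 : ℝ) 1, Vr2 R α' β ≤ Vr2 R α β) ∧
  (∀ β' ∈ Set.Icc (0 : ℝ) 1, Vc2 C α β' ≤ Vc2 C α β)

/-- δ = max entry − min entry of a 2×2 payoff matrix. -/
def spread2 (M : Matrix (Fin 2) (Fin 2) ℝ) : ℝ :=
  (Finset.univ.sup' Finset.univ_nonempty fun p : Fin 2 × Fin 2 => M p.1 p.2)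
  - (Finset.univ.inf' Finset.univ_nonempty fun p : Fin 2 × Fin 2 => M p.1 p.2)

/-- Conditions 1–3 on the initial prediction length γ₀ and the step size η. -/
def Conds2 (R C : Matrix (Fin 2) (Fin 2) ℝ) (γ₀ η : ℝ) : Prop :=
  0 < γ₀ ∧ 0 < η ∧
  4 * γ₀ ^ 2 * spread2 R * spread2 C < 1 ∧
  η < 1 / (spread2 R + spread2 C) ∧ γ₀ < 1 / (spread2 R + spread2 C)

/-- Both agents follow GA-SPP in the 2×2 game: `a`,`b` are the strategies,
`abar`,`bbar` the predictions, `γ` the prediction lengths, `η` the step size. -/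
def GASPP2Run (R C : Matrix (Fin 2) (Fin 2) ℝ) (η : ℝ)
    (γ a b abar bbar : ℕ → ℝ) : Prop :=
  ∀ k : ℕ,
    abar (k + 1) = clamp (a k + γ k * dVr2 R (b k)) ∧
    bbar (k + 1) = clamp (b k + γ k * dVc2 C (a k)) ∧
    ((abar (k + 1) = a k ∧ bbar (k + 1) = b k) →
        a (k + 1) = a k ∧ b (k + 1) = b k ∧ γ (k + 1) = γ k) ∧
    (¬(abar (k + 1) = a k ∧ bbar (k + 1) = b k) →
        a (k + 1) = clamp (a k + η * dVr2 R (bbar (k + 1))) ∧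
        b (k + 1) = clamp (b k + η * dVc2 C (abar (k + 1))) ∧
        ((a (k + 1) = a k ∧ b (k + 1) = b k) →
            ∃ μ : ℝ, 0 < μ ∧ μ < 1 ∧ γ (k + 1) = μ * γ k) ∧
        (¬(a (k + 1) = a k ∧ b (k + 1) = b k) → γ (k + 1) = γ k))

/-- The row agent follows GA-SPP while the column agent follows basic
gradient ascent (GA), based on the opponent's current strategy. -/
def GASPP2vsGARun (R C : Matrix (Fin 2) (Fin 2) ℝ) (η : ℝ)
    (γ a b abar bbar : ℕ → ℝ) : Prop :=
  ∀ k : ℕ,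
    abar (k + 1) = clamp (a k + γ k * dVr2 R (b k)) ∧
    bbar (k + 1) = clamp (b k + γ k * dVc2 C (a k)) ∧
    ((abar (k + 1) = a k ∧ bbar (k + 1) = b k) →
        a (k + 1) = a k ∧ b (k + 1) = b k ∧ γ (k + 1) = γ k) ∧
    (¬(abar (k + 1) = a k ∧ bbar (k + 1) = b k) →
        a (k + 1) = clamp (a k + η * dVr2 R (bbar (k + 1))) ∧
        b (k + 1) = clamp (b k + η * dVc2 C (a k)) ∧
        ((a (k + 1) = a k ∧ b (k + 1) = b k) →
            ∃ μ : ℝ, 0 < μ ∧ μ < 1 ∧ γ (k + 1) = μ * γ k) ∧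
        (¬(a (k + 1) = a k ∧ b (k + 1) = b k) → γ (k + 1) = γ k))

end

/-!
If `u_r = 0`, the row agent's gradient is the constant `b_r`, so whenever GA-SPP does not
terminate its strategy follows clamped steps of fixed size and reaches the maximiser of
`α ↦ b_r α` on `[0, 1]` after finitely many steps. From then on its prediction coincides with
its strategy, so the column agent also faces a constant gradient and freezes in the same way.
Once both have frozen, the prediction step does not move either, so GA-SPP would have terminated,
a contradiction. At termination each strategy is a fixed point of a projected gradient step with
positive step length, i.e. a maximiser of its (affine) payoff on `[0, 1]`: a Nash equilibrium.
The case `u_c = 0` is the same after exchanging the agents, i.e. transposing both matrices.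
-/

open Set

lemma clamp_mem (x : ℝ) : clamp x ∈ Icc (0 : ℝ) 1 :=
  ⟨le_max_left _ _, max_le zero_le_one (min_le_left _ _)⟩

lemma clamp_of_mem {x : ℝ} (hx : x ∈ Icc (0 : ℝ) 1) : clamp x = x := by
  rw [clamp, min_eq_right hx.2, max_eq_right hx.1]

lemma clamp_one_sub (x : ℝ) : clamp (1 - x) = 1 - clamp x := by
  unfold clamp
  rcases le_total 1 x with h | h <;> rcases le_total x 0 with h' | h' <;>
    simp [min_def, max_def] <;> split_ifs <;> linarith

lemma clamp_add_mul_eq_self_iff {x t d : ℝ} (hx : x ∈ Icc (0 : ℝ) 1) (ht : 0 < t) :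
    clamp (x + t * d) = x ↔ IsMaxOn (d * ·) (Icc (0 : ℝ) 1) x := by
  rw [isMaxOn_iff]
  obtain ⟨hx0, hx1⟩ := hx
  rcases lt_trichotomy d 0 with hd | rfl | hd
  · have htd : t * d < 0 := mul_neg_of_pos_of_neg ht hd
    rw [clamp, min_eq_right (by linarith)]
    constructor
    · intro h y hy
      have : x = 0 := by
        by_contra hne
        rcases max_cases 0 (x + t * d) with ⟨hm, -⟩ | ⟨hm, -⟩ <;> rw [hm] at h
        · exact hne h.symm
        · linarith
      subst this
      nlinarith [hy.1]
    · intro h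
      have : x = 0 := by nlinarith [h 0 ⟨le_rfl, zero_le_one⟩]
      subst this
      exact max_eq_left (by linarith)
  · simp [clamp_of_mem ⟨hx0, hx1⟩]
  · have htd : 0 < t * d := mul_pos ht hd
    rw [clamp, max_eq_right (le_min zero_le_one (by linarith))]
    constructor
    · intro h y hy
      have : x = 1 := by
        by_contra hne
        rcases min_cases 1 (x + t * d) with ⟨hm, -⟩ | ⟨hm, -⟩ <;> rw [hm] at h
        · exact hne h.symm
        · linarith
      subst this
      nlinarith [hy.2]
    · intro h
      have : x = 1 := by nlinarith [h 1 ⟨zero_le_one, le_rfl⟩]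
      subst this
      exact min_eq_left (by linarith)

section ClampIterate

variable {η c : ℝ} {x : ℕ → ℝ}

lemma clamp_iterate_eventually_eq_one (hη : 0 < η) (hc : 0 < c) (hx0 : x 0 ∈ Icc (0 : ℝ) 1)
    (hx : ∀ k, x (k + 1) = clamp (x k + η * c)) : ∃ N, ∀ k, N ≤ k → x k = 1 := by
  have hηc : 0 < η * c := mul_pos hη hc
  have hle : ∀ k, x k ≤ 1 := fun
    | 0 => hx0.2
    | k + 1 => hx k ▸ (clamp_mem _).2
  have hclimb : ∀ k : ℕ, min 1 (k * (η * c)) ≤ x k := by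
    intro k
    induction k with
    | zero => simpa using hx0.1
    | succ k ih =>
      rw [hx k, clamp]
      refine le_max_of_le_right (le_min (min_le_left _ _) ?_)
      rcases le_total (k * (η * c)) 1 with h | h
      · rw [min_eq_right h] at ih
        exact min_le_of_right_le (by push_cast; linarith)
      · rw [min_eq_left h] at ih
        exact min_le_of_left_le (by linarith)
  obtain ⟨N, hN⟩ := exists_nat_gt (1 / (η * c))
  refine ⟨N, fun k hk => le_antisymm (hle k) ?_⟩
  have h1 : 1 ≤ (k : ℝ) * (η * c) := by
    rw [div_lt_iff₀ hηc] at hN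
    nlinarith [(Nat.cast_le (α := ℝ)).2 hk]
  simpa [min_eq_left h1] using hclimb k

lemma clamp_iterate_eventually_eq_isMaxOn (hη : 0 < η) (hx0 : x 0 ∈ Icc (0 : ℝ) 1)
    (hx : ∀ k, x (k + 1) = clamp (x k + η * c)) :
    ∃ N x₀, (∀ k, N ≤ k → x k = x₀) ∧ IsMaxOn (c * ·) (Icc (0 : ℝ) 1) x₀ := by
  rcases lt_trichotomy c 0 with hc | rfl | hc
  · have hy : ∀ k, 1 - x (k + 1) = clamp ((1 - x k) + η * -c) := fun k => by
      rw [hx k, ← clamp_one_sub]; ring_nf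
    obtain ⟨N, hN⟩ := clamp_iterate_eventually_eq_one hη (neg_pos.2 hc)
      (x := fun k => 1 - x k) ⟨by linarith [hx0.2], by linarith [hx0.1]⟩ hy
    refine ⟨N, 0, fun k hk => by linarith [hN k hk], isMaxOn_iff.2 fun y hy => ?_⟩
    nlinarith [hy.1]
  · have hconst : ∀ k, x k = x 0 := fun k => by
      induction k with
      | zero => rfl
      | succ k ih => rw [hx k, ih, mul_zero, add_zero, clamp_of_mem hx0]
    exact ⟨0, x 0, fun k _ => hconst k, isMaxOn_iff.2 fun y _ => by simp⟩
  · obtain ⟨N, hN⟩ := clamp_iterate_eventually_eq_one hη hc hx0 hx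
    exact ⟨N, 1, hN, isMaxOn_iff.2 fun y hy => by nlinarith [hy.2]⟩

end ClampIterate

lemma Vr2_sub_Vr2 (R : Matrix (Fin 2) (Fin 2) ℝ) (α α' β : ℝ) :
    Vr2 R α' β - Vr2 R α β = dVr2 R β * α' - dVr2 R β * α := by
  simp only [Vr2, dVr2, ur2, br2]; ring

lemma Vc2_sub_Vc2 (C : Matrix (Fin 2) (Fin 2) ℝ) (α β β' : ℝ) :
    Vc2 C α β' - Vc2 C α β = dVc2 C α * β' - dVc2 C α * β := by
  simp only [Vc2, dVc2, uc2, bc2]; ring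

lemma isNash2_of_isMaxOn {R C : Matrix (Fin 2) (Fin 2) ℝ} {α β : ℝ}
    (hα : α ∈ Icc (0 : ℝ) 1) (hβ : β ∈ Icc (0 : ℝ) 1)
    (hαmax : IsMaxOn (dVr2 R β * ·) (Icc (0 : ℝ) 1) α)
    (hβmax : IsMaxOn (dVc2 C α * ·) (Icc (0 : ℝ) 1) β) : IsNash2 R C α β :=
  ⟨hα, hβ,
    fun α' hα' => sub_nonpos.1 <| (Vr2_sub_Vr2 R α α' β).trans_le <| sub_nonpos.2 <| hαmax hα',
    fun β' hβ' => sub_nonpos.1 <| (Vc2_sub_Vc2 C α β β').trans_le <| sub_nonpos.2 <| hβmax hβ'⟩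

lemma dVr2_transpose (M : Matrix (Fin 2) (Fin 2) ℝ) (x : ℝ) : dVr2 M.transpose x = dVc2 M x := by
  simp only [dVr2, dVc2, ur2, uc2, br2, bc2, Matrix.transpose_apply]; ring

lemma dVc2_transpose (M : Matrix (Fin 2) (Fin 2) ℝ) (x : ℝ) : dVc2 M.transpose x = dVr2 M x := by
  simp only [dVr2, dVc2, ur2, uc2, br2, bc2, Matrix.transpose_apply]; ring

lemma ur2_transpose (M : Matrix (Fin 2) (Fin 2) ℝ) : ur2 M.transpose = uc2 M := by
  simp only [uc2, ur2, Matrix.transpose_apply]; ring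

namespace GASPP2Run

variable {R C : Matrix (Fin 2) (Fin 2) ℝ} {η : ℝ} {γ a b abar bbar : ℕ → ℝ}

lemma swap (hrun : GASPP2Run R C η γ a b abar bbar) :
    GASPP2Run C.transpose R.transpose η γ b a bbar abar := by
  intro k
  obtain ⟨habar, hbbar, hstop, hmove⟩ := hrun k
  simp only [dVr2_transpose, dVc2_transpose]
  refine ⟨hbbar, habar, fun h => ?_, fun h => ?_⟩
  · obtain ⟨ha, hb, hγ⟩ := hstop h.symm
    exact ⟨hb, ha, hγ⟩
  · obtain ⟨ha, hb, hshrink, hkeep⟩ := hmove fun h' => h h'.symm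
    exact ⟨hb, ha, fun h' => hshrink h'.symm, fun h' => hkeep fun h'' => h' h''.symm⟩

lemma gamma_pos (hrun : GASPP2Run R C η γ a b abar bbar) (hγ₀ : 0 < γ 0) : ∀ k, 0 < γ k := by
  intro k
  induction k with
  | zero => exact hγ₀
  | succ k ih =>
    obtain ⟨-, -, hstop, hmove⟩ := hrun k
    by_cases hbar : abar (k + 1) = a k ∧ bbar (k + 1) = b k
    · rw [(hstop hbar).2.2]; exact ih
    · obtain ⟨-, -, hshrink, hkeep⟩ := hmove hbar
      by_cases hsame : a (k + 1) = a k ∧ b (k + 1) = b k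
      · obtain ⟨μ, hμ, -, hγ⟩ := hshrink hsame
        rw [hγ]; exact mul_pos hμ ih
      · rw [hkeep hsame]; exact ih

lemma mem_Icc (hrun : GASPP2Run R C η γ a b abar bbar) (ha₀ : a 0 ∈ Icc (0 : ℝ) 1)
    (hb₀ : b 0 ∈ Icc (0 : ℝ) 1) : ∀ k, a k ∈ Icc (0 : ℝ) 1 ∧ b k ∈ Icc (0 : ℝ) 1 := by
  intro k
  induction k with
  | zero => exact ⟨ha₀, hb₀⟩
  | succ k ih =>
    obtain ⟨-, -, hstop, hmove⟩ := hrun k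
    by_cases hbar : abar (k + 1) = a k ∧ bbar (k + 1) = b k
    · obtain ⟨ha, hb, -⟩ := hstop hbar
      rw [ha, hb]; exact ih
    · obtain ⟨ha, hb, -⟩ := hmove hbar
      rw [ha, hb]; exact ⟨clamp_mem _, clamp_mem _⟩

/-- `γ` is part of the invariant because the predictions, and hence the stopping test, depend
on it. -/
lemma eventually_const_of_stop (hrun : GASPP2Run R C η γ a b abar bbar) {K : ℕ}
    (hK : abar (K + 1) = a K ∧ bbar (K + 1) = b K) :
    ∀ k, K ≤ k → a k = a K ∧ b k = b K ∧ γ k = γ K := by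
  intro k hk
  induction k, hk using Nat.le_induction with
  | base => exact ⟨rfl, rfl, rfl⟩
  | succ k _ ih =>
    obtain ⟨ha, hb, hγ⟩ := ih
    have hbar : abar (k + 1) = a k ∧ bbar (k + 1) = b k := by
      rw [(hrun k).1, (hrun k).2.1, ha, hb, hγ, ← (hrun K).1, ← (hrun K).2.1]
      exact hK
    obtain ⟨ha', hb', hγ'⟩ := (hrun k).2.2.1 hbar
    exact ⟨ha'.trans ha, hb'.trans hb, hγ'.trans hγ⟩

lemma isNash2_of_stop (hrun : GASPP2Run R C η γ a b abar bbar) {K : ℕ}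
    (hK : abar (K + 1) = a K ∧ bbar (K + 1) = b K) (hγK : 0 < γ K)
    (haK : a K ∈ Icc (0 : ℝ) 1) (hbK : b K ∈ Icc (0 : ℝ) 1) : IsNash2 R C (a K) (b K) := by
  refine isNash2_of_isMaxOn haK hbK ?_ ?_
  · rw [← clamp_add_mul_eq_self_iff haK hγK, ← (hrun K).1]; exact hK.1
  · rw [← clamp_add_mul_eq_self_iff hbK hγK, ← (hrun K).2.1]; exact hK.2

lemma exists_stop_of_ur2_eq_zero (hrun : GASPP2Run R C η γ a b abar bbar) (hR : ur2 R = 0)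
    (hη : 0 < η) (hγ : ∀ k, 0 < γ k)
    (hmem : ∀ k, a k ∈ Icc (0 : ℝ) 1 ∧ b k ∈ Icc (0 : ℝ) 1) :
    ∃ K, abar (K + 1) = a K ∧ bbar (K + 1) = b K := by
  have hdVr : ∀ β, dVr2 R β = br2 R := fun β => by rw [dVr2, hR, zero_mul, zero_add]
  by_contra! hmove
  have hstep k := (hrun k).2.2.2 fun h => hmove k h.1 h.2
  obtain ⟨N, a₀, ha, ha₀⟩ := clamp_iterate_eventually_eq_isMaxOn hη (hmem 0).1
    fun k => (hstep k).1.trans (by rw [hdVr])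
  have habar : ∀ k, N ≤ k → abar (k + 1) = a₀ := fun k hk => by
    rw [(hrun k).1, hdVr, ha k hk, clamp_add_mul_eq_self_iff (ha N le_rfl ▸ (hmem N).1) (hγ k)]
    exact ha₀
  obtain ⟨M, b₀, hb, hb₀⟩ := clamp_iterate_eventually_eq_isMaxOn (x := fun k => b (N + k))
    (c := dVc2 C a₀) hη (hmem N).2 fun k => by
      simp only [← add_assoc, (hstep (N + k)).2.1, habar (N + k) (Nat.le_add_right N k)]
  have hNM := Nat.le_add_right N M
  refine hmove (N + M) (by rw [habar _ hNM, ha _ hNM]) ?_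
  rw [(hrun _).2.1, ha _ hNM, hb M le_rfl,
    clamp_add_mul_eq_self_iff (hb M le_rfl ▸ (hmem _).2) (hγ _)]
  exact hb₀

end GASPP2Run

/-- Lemma 2: in a 2×2 game with u_r u_c = 0, if both agents
follow GA-SPP (Conditions 1–3), then from any initial strategy pair the
strategies become constant after finitely many steps, at a Nash equilibrium. -/
theorem stmt8 (R C : Matrix (Fin 2) (Fin 2) ℝ)
    (hU : ur2 R * uc2 C = 0)
    (γ₀ η : ℝ) (hcond : Conds2 R C γ₀ η)
    (γ a b abar bbar : ℕ → ℝ)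
    (hγ₀ : γ 0 = γ₀) (ha₀ : a 0 ∈ Set.Icc (0 : ℝ) 1) (hb₀ : b 0 ∈ Set.Icc (0 : ℝ) 1)
    (hrun : GASPP2Run R C η γ a b abar bbar) :
    ∃ K : ℕ, (∀ k : ℕ, K ≤ k → a k = a K ∧ b k = b K) ∧ IsNash2 R C (a K) (b K) := by
  obtain ⟨hγ₀pos, hη, -⟩ := hcond
  have hγ := hrun.gamma_pos (hγ₀ ▸ hγ₀pos)
  have hmem := hrun.mem_Icc ha₀ hb₀
  obtain ⟨K, hK⟩ : ∃ K, abar (K + 1) = a K ∧ bbar (K + 1) = b K := by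
    rcases mul_eq_zero.1 hU with hR | hC
    · exact hrun.exists_stop_of_ur2_eq_zero hR hη hγ hmem
    · obtain ⟨K, hb, ha⟩ := hrun.swap.exists_stop_of_ur2_eq_zero (by rwa [ur2_transpose])
        hη hγ fun k => (hmem k).symm
      exact ⟨K, ha, hb⟩
  refine ⟨K, fun k hk => ?_, hrun.isNash2_of_stop hK (hγ K) (hmem K).1 (hmem K).2⟩
  obtain ⟨ha, hb, -⟩ := hrun.eventually_const_of_stop hK k hk
  exact ⟨ha, hb⟩
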